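/- Let (g₈, J_A) have (1,0)-basis ω¹,ω²,ω³ with dω¹ = −(A−i)ω¹∧ω³ − (A+i)ω¹∧ω̄³ + B ω³∧ω̄³, dω² = (A−i)ω²∧ω³ + (A+i)ω²∧ω̄³ + C ω³∧ω̄³, dω³ = 0 (Im A ≠ 0), and F a generic Hermitian form as above, with r²s² > |u|². Then ∂(F∧F) = 0 (F is balanced) if and only if B = −((i s² z̄ + ū v̄)/(r²s² − |u|²))(A+i) and C = ((i r² v̄ − u z̄)/(r²s² − |u|²))(A+i). Consequently: if B = C = 0 and A ≠ −i, then F is balanced iff v = z = 0; if B = C = 0 and A = −i, every Hermitian F is balanced; and if A = −i but (B,C) ≠ (0,0), no Hermitian F is balanced. -/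

import Mathlib

noncomputable section

/-- The space of invariant complex forms: the exterior algebra over the span of
`ω¹, ω², ω³, ω̄¹, ω̄², ω̄³` (indexed `0,…,5`). -/
abbrev Lambda : Type := ExteriorAlgebra ℂ (Fin 6 → ℂ)

/-- The generators `ω¹, ω², ω³, ω̄¹, ω̄², ω̄³` as degree-one elements. -/
def w (i : Fin 6) : Lambda := ExteriorAlgebra.ι ℂ (Pi.single i 1)

/-- Antiderivation property (Leibniz rule against `1`-forms): the defining extension
property of (the bigraded pieces of) the Chevalley–Eilenberg differential. -/
def IsAntideriv (D : Lambda →ₗ[ℂ] Lambda) : Prop :=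
  D 1 = 0 ∧ ∀ (v : Fin 6 → ℂ) (x : Lambda),
    D (ExteriorAlgebra.ι ℂ v * x) =
      D (ExteriorAlgebra.ι ℂ v) * x - ExteriorAlgebra.ι ℂ v * D x

/-- The generic Hermitian form
`2F = i(r²ω¹∧ω̄¹ + s²ω²∧ω̄² + t²ω³∧ω̄³) + uω¹∧ω̄² − ūω²∧ω̄¹ + vω²∧ω̄³ − v̄ω³∧ω̄²
  + zω¹∧ω̄³ − z̄ω³∧ω̄¹`. -/
def Fherm (r s t : ℝ) (u v z : ℂ) : Lambda :=
  (1 / 2 : ℂ) •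
    (Complex.I • ((r : ℂ) ^ 2 • (w 0 * w 3) + (s : ℂ) ^ 2 • (w 1 * w 4) +
        (t : ℂ) ^ 2 • (w 2 * w 5)) +
      u • (w 0 * w 4) - (starRingEnd ℂ) u • (w 1 * w 3) +
      v • (w 1 * w 5) - (starRingEnd ℂ) v • (w 2 * w 4) +
      z • (w 0 * w 5) - (starRingEnd ℂ) z • (w 2 * w 3))

/-- Positivity constraints making `Fherm r s t u v z` a Hermitian metric. -/
def HermPos (r s t : ℝ) (u v z : ℂ) : Prop :=
  r ≠ 0 ∧ s ≠ 0 ∧ t ≠ 0 ∧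
  r ^ 2 * s ^ 2 > Complex.normSq u ∧ s ^ 2 * t ^ 2 > Complex.normSq v ∧
  r ^ 2 * t ^ 2 > Complex.normSq z ∧
  r ^ 2 * s ^ 2 * t ^ 2 +
      2 * (Complex.I * (starRingEnd ℂ) u * (starRingEnd ℂ) v * z).re >
    t ^ 2 * Complex.normSq u + r ^ 2 * Complex.normSq v + s ^ 2 * Complex.normSq z

/-!
Expanding `F ∧ F` in the nine `(2,2)`-monomials and applying the Leibniz rule, `∂(F ∧ F)` has
only two components, along `ω¹²³ ∧ ω̄¹ ∧ ω̄³` and `ω¹²³ ∧ ω̄² ∧ ω̄³`; twice they are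
`−[(ir²v + ūz)(Ā − i) + (r²s² − |u|²)C̄]` and `(uv − is²z)(Ā − i) + (r²s² − |u|²)B̄`.
As `r²s² − |u|² ≠ 0`, these vanish iff `C`, resp. `B`, takes the stated value.
When `B = C = 0` and `A ≠ −i` this is a linear system in `(z̄, v̄)` of determinant
`|u|² − r²s² ≠ 0`; when `A = −i` both values are `0`, so balance means `B = C = 0`.
-/

open Complex ComplexConjugate

namespace ExteriorAlgebra

variable {R ι : Type*} [CommRing R]

def monomialCoord (n : ℕ) (c : Fin n → ι) : ExteriorAlgebra R (ι → R) →ₗ[R] R :=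
  liftAlternating (Pi.single (M := fun m => (ι → R) [⋀^Fin m]→ₗ[R] R) n
    (Matrix.detRowAlternating.compLinearMap (LinearMap.funLeft R R c)))

variable [DecidableEq ι] {n : ℕ} (c : Fin n → ι)

theorem monomialCoord_ιMulti_single (c' : Fin n → ι) :
    monomialCoord n c (ιMulti R n fun i => Pi.single (c' i) 1) =
      (Matrix.of fun i j => (Pi.single (c' i) 1 : ι → R) (c j)).det := by
  rw [monomialCoord, liftAlternating_apply_ιMulti, Pi.single_eq_same]
  rfl

theorem monomialCoord_ιMulti_single_self (hc : Function.Injective c) :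
    monomialCoord n c (ιMulti R n fun i => Pi.single (c i) 1) = 1 := by
  rw [monomialCoord_ιMulti_single]
  convert (Matrix.det_one : (1 : Matrix (Fin n) (Fin n) R).det = 1) using 2
  ext i j
  simp [Pi.single_apply, Matrix.one_apply, hc.eq_iff, eq_comm]

theorem monomialCoord_ιMulti_single_eq_zero {c' : Fin n → ι} (i : Fin n)
    (h : ∀ j, c j ≠ c' i) :
    monomialCoord n c (ιMulti R n fun i => Pi.single (c' i) 1) = 0 := by
  rw [monomialCoord_ιMulti_single]
  exact Matrix.det_eq_zero_of_row_eq_zero i fun j => Pi.single_eq_of_ne (h j) 1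

end ExteriorAlgebra

open ExteriorAlgebra

lemma w_mul_self (i : Fin 6) : w i * w i = 0 := ι_sq_zero _

lemma w_mul_w_mul_self (i : Fin 6) (x : Lambda) : w i * (w i * x) = 0 := by
  rw [← mul_assoc, w_mul_self, zero_mul]

lemma w_anticomm (i j : Fin 6) : w i * w j = -(w j * w i) :=
  eq_neg_of_add_eq_zero_left (ι_add_mul_swap _ _)

lemma w_mul_w_mul_anticomm (i j : Fin 6) (x : Lambda) :
    w i * (w j * x) = -(w j * (w i * x)) := by
  rw [← mul_assoc, w_anticomm i j, neg_mul, mul_assoc]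

lemma w_mul_five (a : Fin 5 → Fin 6) :
    w (a 0) * (w (a 1) * (w (a 2) * (w (a 3) * w (a 4)))) =
      ιMulti ℂ 5 fun i => Pi.single (a i) 1 := by
  rw [ιMulti_apply]
  simp only [List.ofFn_succ, List.ofFn_zero, List.prod_cons, List.prod_nil, mul_one, w]
  rfl

lemma smul_add_smul_eq_zero_iff (a b : ℂ) :
    a • (w 0 * (w 1 * (w 2 * (w 3 * w 5)))) + b • (w 0 * (w 1 * (w 2 * (w 4 * w 5)))) = 0 ↔
      a = 0 ∧ b = 0 := by
  refine ⟨fun h => ?_, fun ⟨ha, hb⟩ => by simp [ha, hb]⟩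
  have e₁ := w_mul_five ![0, 1, 2, 3, 5]
  have e₂ := w_mul_five ![0, 1, 2, 4, 5]
  simp only [Matrix.cons_val] at e₁ e₂
  have h₁ := congrArg (monomialCoord 5 ![0, 1, 2, 3, 5]) h
  have h₂ := congrArg (monomialCoord 5 ![0, 1, 2, 4, 5]) h
  simp only [map_add, map_smul, map_zero, e₁, e₂, smul_eq_mul] at h₁ h₂
  rw [monomialCoord_ιMulti_single_self _ (by decide),
    monomialCoord_ιMulti_single_eq_zero _ 3 (by decide)] at h₁
  rw [monomialCoord_ιMulti_single_self _ (by decide),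
    monomialCoord_ιMulti_single_eq_zero _ 3 (by decide)] at h₂
  simpa using And.intro h₁ h₂

lemma add_mul_conj_eq_zero_iff {X D Y : ℂ} (hD : D ≠ 0) :
    X + D * conj Y = 0 ↔ Y = -conj X / conj D := by
  calc X + D * conj Y = 0 ↔ conj X + conj D * Y = 0 := by
        rw [← map_eq_zero_iff _ (starRingEnd ℂ).injective, map_add, map_mul, conj_conj]
    _ ↔ Y = -conj X / conj D := by
        rw [eq_div_iff ((map_ne_zero _).2 hD)]
        constructor <;> intro h <;> linear_combination h

lemma Fherm_mul_self (r s t : ℝ) (u v z : ℂ) :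
    Fherm r s t u v z * Fherm r s t u v z =
      ((r ^ 2 * s ^ 2 - u * conj u) / 2 : ℂ) • (w 0 * (w 1 * (w 3 * w 4))) +
      (-(conj u * z + I * r ^ 2 * v) / 2) • (w 0 * (w 1 * (w 3 * w 5))) +
      (-(u * v - I * s ^ 2 * z) / 2) • (w 0 * (w 1 * (w 4 * w 5))) +
      (-(u * conj z - I * r ^ 2 * conj v) / 2) • (w 0 * (w 2 * (w 3 * w 4))) +
      ((r ^ 2 * t ^ 2 - z * conj z) / 2 : ℂ) • (w 0 * (w 2 * (w 3 * w 5))) +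
      (-(conj v * z + I * t ^ 2 * u) / 2) • (w 0 * (w 2 * (w 4 * w 5))) +
      (-(conj u * conj v + I * s ^ 2 * conj z) / 2) • (w 1 * (w 2 * (w 3 * w 4))) +
      (-(v * conj z - I * t ^ 2 * conj u) / 2) • (w 1 * (w 2 * (w 3 * w 5))) +
      ((s ^ 2 * t ^ 2 - v * conj v) / 2 : ℂ) • (w 1 * (w 2 * (w 4 * w 5))) := by
  rw [Fherm]
  -- the guards `j < i` make `simp` sort every monomial instead of looping
  simp +decide only [smul_add, smul_sub, smul_smul, add_mul, sub_mul, mul_add, mul_sub,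
    smul_mul_assoc, mul_smul_comm, mul_assoc, w_mul_self, w_mul_w_mul_self,
    fun i j (_ : j < i) => w_anticomm i j, fun i j (_ : j < i) => w_mul_w_mul_anticomm i j,
    mul_neg, smul_neg, neg_neg, mul_zero, smul_zero,
    add_zero, zero_add, neg_zero, sub_zero, sub_neg_eq_add]
  match_scalars <;> (first | ring1 | (ring_nf; simp only [I_sq]; ring1))

theorem IsAntideriv.two_smul_apply_Fherm_mul_self {A B C : ℂ} {Dp : Lambda →ₗ[ℂ] Lambda}
    (hDp : IsAntideriv Dp)
    (hp0 : Dp (w 0) = (-(A - I)) • (w 0 * w 2))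
    (hp1 : Dp (w 1) = (A - I) • (w 1 * w 2))
    (hp2 : Dp (w 2) = 0)
    (hp3 : Dp (w 3) = (-(conj A - I)) • (w 3 * w 2) + conj B • (w 5 * w 2))
    (hp4 : Dp (w 4) = (conj A - I) • (w 4 * w 2) + conj C • (w 5 * w 2))
    (hp5 : Dp (w 5) = 0)
    (r s t : ℝ) (u v z : ℂ) :
    (2 : ℂ) • Dp (Fherm r s t u v z * Fherm r s t u v z) =
      -((I * r ^ 2 * v + conj u * z) * (conj A - I) + (r ^ 2 * s ^ 2 - normSq u) * conj C) •
          (w 0 * (w 1 * (w 2 * (w 3 * w 5)))) +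
        ((u * v - I * s ^ 2 * z) * (conj A - I) + (r ^ 2 * s ^ 2 - normSq u) * conj B) •
          (w 0 * (w 1 * (w 2 * (w 4 * w 5)))) := by
  have leibniz : ∀ (i : Fin 6) (x : Lambda), Dp (w i * x) = Dp (w i) * x - w i * Dp x :=
    fun i => hDp.2 (Pi.single i 1)
  rw [Fherm_mul_self, normSq_eq_conj_mul_self]
  simp +decide only [map_add, map_smul, leibniz, hp0, hp1, hp2, hp3, hp4, hp5,
    smul_add, smul_sub, smul_smul, add_mul, sub_mul, mul_add, mul_sub,
    smul_mul_assoc, mul_smul_comm, mul_assoc, w_mul_self, w_mul_w_mul_self,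
    fun i j (_ : j < i) => w_anticomm i j, fun i j (_ : j < i) => w_mul_w_mul_anticomm i j,
    mul_neg, neg_mul, smul_neg, neg_neg, mul_zero, zero_mul, smul_zero,
    add_zero, neg_zero, sub_zero, sub_neg_eq_add]
  match_scalars <;> ring

lemma eq_zero_and_eq_zero_of_linear_system_conj {r s : ℝ} {u v z : ℂ}
    (hu : normSq u < r ^ 2 * s ^ 2)
    (h₁ : I * (s : ℂ) ^ 2 * conj z + conj u * conj v = 0)
    (h₂ : I * (r : ℂ) ^ 2 * conj v - u * conj z = 0) : v = 0 ∧ z = 0 := by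
  have hD : (r : ℂ) ^ 2 * s ^ 2 - conj u * u ≠ 0 := by
    rw [← normSq_eq_conj_mul_self]; exact_mod_cast (sub_pos.2 hu).ne'
  -- Cramer's rule for the system in `(z̄, v̄)`, whose determinant is `|u|² - r²s²`
  have hv : ((r : ℂ) ^ 2 * s ^ 2 - conj u * u) * conj v = 0 := by
    linear_combination (-u) * h₁ - I * (s : ℂ) ^ 2 * h₂ + (r : ℂ) ^ 2 * s ^ 2 * conj v * I_sq
  have hz : ((r : ℂ) ^ 2 * s ^ 2 - conj u * u) * conj z = 0 := by
    linear_combination (-I) * (r : ℂ) ^ 2 * h₁ + conj u * h₂ + (r : ℂ) ^ 2 * s ^ 2 * conj z * I_sq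
  simpa [hD] using And.intro hv hz

theorem IsAntideriv.apply_Fherm_mul_self_eq_zero_iff {A B C : ℂ} {Dp : Lambda →ₗ[ℂ] Lambda}
    (hDp : IsAntideriv Dp)
    (hp0 : Dp (w 0) = (-(A - I)) • (w 0 * w 2))
    (hp1 : Dp (w 1) = (A - I) • (w 1 * w 2))
    (hp2 : Dp (w 2) = 0)
    (hp3 : Dp (w 3) = (-(conj A - I)) • (w 3 * w 2) + conj B • (w 5 * w 2))
    (hp4 : Dp (w 4) = (conj A - I) • (w 4 * w 2) + conj C • (w 5 * w 2))
    (hp5 : Dp (w 5) = 0)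
    (r s t : ℝ) (u v z : ℂ) (hu : normSq u < r ^ 2 * s ^ 2) :
    Dp (Fherm r s t u v z * Fherm r s t u v z) = 0 ↔
      B = -((I * (s : ℂ) ^ 2 * conj z + conj u * conj v) /
          ((r : ℂ) ^ 2 * (s : ℂ) ^ 2 - (normSq u : ℂ))) * (A + I) ∧
       C = ((I * (r : ℂ) ^ 2 * conj v - u * conj z) /
          ((r : ℂ) ^ 2 * (s : ℂ) ^ 2 - (normSq u : ℂ))) * (A + I) := by
  have hD : (r : ℂ) ^ 2 * s ^ 2 - normSq u ≠ 0 := by exact_mod_cast (sub_pos.2 hu).ne'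
  have hconjD : conj ((r : ℂ) ^ 2 * s ^ 2 - normSq u) = (r : ℂ) ^ 2 * s ^ 2 - normSq u := by
    simp [conj_ofReal]
  rw [← smul_eq_zero_iff_right (two_ne_zero' ℂ),
    hDp.two_smul_apply_Fherm_mul_self hp0 hp1 hp2 hp3 hp4 hp5, smul_add_smul_eq_zero_iff,
    neg_eq_zero, add_mul_conj_eq_zero_iff hD, add_mul_conj_eq_zero_iff hD, hconjD, and_comm]
  simp only [map_add, map_sub, map_mul, map_pow, conj_conj, conj_I, conj_ofReal]
  constructor <;> rintro ⟨rfl, rfl⟩ <;> constructor <;> ring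

theorem stmt13_general (A B C : ℂ)
    (Dp : Lambda →ₗ[ℂ] Lambda) (hDp : IsAntideriv Dp)
    (hp0 : Dp (w 0) = (-(A - Complex.I)) • (w 0 * w 2))
    (hp1 : Dp (w 1) = (A - Complex.I) • (w 1 * w 2))
    (hp2 : Dp (w 2) = 0)
    (hp3 : Dp (w 3) = (-((starRingEnd ℂ) A - Complex.I)) • (w 3 * w 2) +
      (starRingEnd ℂ) B • (w 5 * w 2))
    (hp4 : Dp (w 4) = ((starRingEnd ℂ) A - Complex.I) • (w 4 * w 2) +
      (starRingEnd ℂ) C • (w 5 * w 2))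
    (hp5 : Dp (w 5) = 0)
    (r s t : ℝ) (u v z : ℂ) (hF : HermPos r s t u v z) :
    (Dp (Fherm r s t u v z * Fherm r s t u v z) = 0 ↔
      (B = -((Complex.I * (s : ℂ) ^ 2 * (starRingEnd ℂ) z +
          (starRingEnd ℂ) u * (starRingEnd ℂ) v) /
          ((r : ℂ) ^ 2 * (s : ℂ) ^ 2 - (Complex.normSq u : ℂ))) * (A + Complex.I) ∧
       C = ((Complex.I * (r : ℂ) ^ 2 * (starRingEnd ℂ) v - u * (starRingEnd ℂ) z) /
          ((r : ℂ) ^ 2 * (s : ℂ) ^ 2 - (Complex.normSq u : ℂ))) * (A + Complex.I))) ∧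
    (B = 0 → C = 0 → A ≠ -Complex.I →
      (Dp (Fherm r s t u v z * Fherm r s t u v z) = 0 ↔ v = 0 ∧ z = 0)) ∧
    (B = 0 → C = 0 → A = -Complex.I →
      Dp (Fherm r s t u v z * Fherm r s t u v z) = 0) ∧
    (A = -Complex.I → ¬(B = 0 ∧ C = 0) →
      Dp (Fherm r s t u v z * Fherm r s t u v z) ≠ 0) := by
  have hu : normSq u < r ^ 2 * s ^ 2 := hF.2.2.2.1
  have hD : (r : ℂ) ^ 2 * s ^ 2 - normSq u ≠ 0 := by exact_mod_cast (sub_pos.2 hu).ne'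
  have balanced := hDp.apply_Fherm_mul_self_eq_zero_iff hp0 hp1 hp2 hp3 hp4 hp5 r s t u v z hu
  have balanced_of_eq_neg_I (hA : A = -I) :
      Dp (Fherm r s t u v z * Fherm r s t u v z) = 0 ↔ B = 0 ∧ C = 0 := by
    simp [balanced, hA]
  refine ⟨balanced, fun hB hC hA => ?_, fun hB hC hA => (balanced_of_eq_neg_I hA).2 ⟨hB, hC⟩,
    fun hA hBC => mt (balanced_of_eq_neg_I hA).1 hBC⟩
  have hAI : A + I ≠ 0 := fun h => hA (eq_neg_of_add_eq_zero_left h)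
  rw [balanced, hB, hC]
  constructor
  · rintro ⟨h₁, h₂⟩
    simp only [zero_eq_mul, neg_eq_zero, div_eq_zero_iff, hD, hAI, or_false] at h₁ h₂
    exact eq_zero_and_eq_zero_of_linear_system_conj hu h₁ h₂
  · rintro ⟨rfl, rfl⟩
    simp

/-- balanced metrics on `(g₈, J_A)`: `∂(F²) = 0` iff
`B = −((is²z̄+ūv̄)/(r²s²−|u|²))(A+i)` and `C = ((ir²v̄−uz̄)/(r²s²−|u|²))(A+i)`;
consequently the three listed special cases. -/
theorem stmt13 (A B C : ℂ) (hA : A.im ≠ 0)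
    (Dp Db : Lambda →ₗ[ℂ] Lambda) (hDp : IsAntideriv Dp) (hDb : IsAntideriv Db)
    (hp0 : Dp (w 0) = (-(A - Complex.I)) • (w 0 * w 2))
    (hp1 : Dp (w 1) = (A - Complex.I) • (w 1 * w 2))
    (hp2 : Dp (w 2) = 0)
    (hp3 : Dp (w 3) = (-((starRingEnd ℂ) A - Complex.I)) • (w 3 * w 2) +
      (starRingEnd ℂ) B • (w 5 * w 2))
    (hp4 : Dp (w 4) = ((starRingEnd ℂ) A - Complex.I) • (w 4 * w 2) +
      (starRingEnd ℂ) C • (w 5 * w 2))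
    (hp5 : Dp (w 5) = 0)
    (hb0 : Db (w 0) = (-(A + Complex.I)) • (w 0 * w 5) + B • (w 2 * w 5))
    (hb1 : Db (w 1) = (A + Complex.I) • (w 1 * w 5) + C • (w 2 * w 5))
    (hb2 : Db (w 2) = 0)
    (hb3 : Db (w 3) = (-((starRingEnd ℂ) A + Complex.I)) • (w 3 * w 5))
    (hb4 : Db (w 4) = ((starRingEnd ℂ) A + Complex.I) • (w 4 * w 5))
    (hb5 : Db (w 5) = 0)
    (r s t : ℝ) (u v z : ℂ) (hF : HermPos r s t u v z) :
    (Dp (Fherm r s t u v z * Fherm r s t u v z) = 0 ↔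
      (B = -((Complex.I * (s : ℂ) ^ 2 * (starRingEnd ℂ) z +
          (starRingEnd ℂ) u * (starRingEnd ℂ) v) /
          ((r : ℂ) ^ 2 * (s : ℂ) ^ 2 - (Complex.normSq u : ℂ))) * (A + Complex.I) ∧
       C = ((Complex.I * (r : ℂ) ^ 2 * (starRingEnd ℂ) v - u * (starRingEnd ℂ) z) /
          ((r : ℂ) ^ 2 * (s : ℂ) ^ 2 - (Complex.normSq u : ℂ))) * (A + Complex.I))) ∧
    (B = 0 → C = 0 → A ≠ -Complex.I →
      (Dp (Fherm r s t u v z * Fherm r s t u v z) = 0 ↔ v = 0 ∧ z = 0)) ∧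
    (B = 0 → C = 0 → A = -Complex.I →
      Dp (Fherm r s t u v z * Fherm r s t u v z) = 0) ∧
    (A = -Complex.I → ¬(B = 0 ∧ C = 0) →
      Dp (Fherm r s t u v z * Fherm r s t u v z) ≠ 0) :=
  stmt13_general A B C Dp hDp hp0 hp1 hp2 hp3 hp4 hp5 r s t u v z hF

end
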